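/- If G is a minimal forbidden induced subgraph for Υ_k, then Δ(G) = |V(G)| - 1 and χ(G) = |V(G)| - k - 1. -/

import Mathlib

open SimpleGraph

attribute [local instance] Classical.propDecidable

set_option linter.unnecessarySeqFocus false

/-- `G ∈ Υ_k`: every nonempty induced subgraph `H` satisfies `Δ(H) + 1 ≤ χ(H) + k`,
i.e. `Δ(H) ≤ χ(H) + k - 1`. -/
def UpsilonMem (k : ℕ) {V : Type*} [Fintype V] (G : SimpleGraph V) : Prop :=
  ∀ s : Finset V, s.Nonempty →
    ((G.induce (s : Set V)).maxDegree + 1 : ℕ∞) ≤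
      (G.induce (s : Set V)).chromaticNumber + (k : ℕ∞)

/-- `G ∈ Ω_k`: every nonempty induced subgraph `H` satisfies `Δ(H) + 1 ≤ ω(H) + k`. -/
def OmegaMem (k : ℕ) {V : Type*} [Fintype V] (G : SimpleGraph V) : Prop :=
  ∀ s : Finset V, s.Nonempty →
    (G.induce (s : Set V)).maxDegree + 1 ≤ (G.induce (s : Set V)).cliqueNum + k

/-- `G` is a minimal forbidden induced subgraph for `Υ_k`. -/
def MinForbUpsilon (k : ℕ) {V : Type*} [Fintype V] (G : SimpleGraph V) : Prop :=
  ¬ UpsilonMem k G ∧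
    ∀ s : Finset V, s ≠ Finset.univ → UpsilonMem k (G.induce (s : Set V))

/-- `G` is a minimal forbidden induced subgraph for `Ω_k`. -/
def MinForbOmega (k : ℕ) {V : Type*} [Fintype V] (G : SimpleGraph V) : Prop :=
  ¬ OmegaMem k G ∧
    ∀ s : Finset V, s ≠ Finset.univ → OmegaMem k (G.induce (s : Set V))

/-- `v` is a dominating vertex of `G`. -/
def IsDominatingVertex {V : Type*} (G : SimpleGraph V) (v : V) : Prop :=
  ∀ w, w ≠ v → G.Adj v w

/-- In every optimal proper coloring of `G`, every used color class has at least 2 vertices. -/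
def AllColorClassesBig {V : Type*} [Fintype V] (G : SimpleGraph V) : Prop :=
  ∀ (n : ℕ) (C : G.Coloring (Fin n)), (n : ℕ∞) = G.chromaticNumber →
    ∀ c : Fin n, (∃ u, C u = c) → 2 ≤ Fintype.card {u // C u = c}

/-- `G` is a perfect graph: clique number equals chromatic number for every induced subgraph. -/
def IsPerfect {V : Type*} [Fintype V] (G : SimpleGraph V) : Prop :=
  ∀ s : Finset V,
    (((G.induce (s : Set V)).cliqueNum : ℕ∞)) = (G.induce (s : Set V)).chromaticNumber

/-- Add a dominating vertex to `G`. -/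
def cone {V : Type*} (G : SimpleGraph V) : SimpleGraph (Option V) where
  Adj a b := match a, b with
    | some a, some b => G.Adj a b
    | some _, none => True
    | none, some _ => True
    | none, none => False
  symm := ⟨by rintro (_|a) (_|b) h <;> simp_all <;> exact h.symm⟩
  loopless := ⟨by rintro (_|a) h <;> simp_all⟩

/-- The claw `K_{1,3}`. -/
def claw : SimpleGraph (Fin 1 ⊕ Fin 3) := completeBipartiteGraph (Fin 1) (Fin 3)

/-- The gem: `P₄` plus a dominating vertex. -/
def gem : SimpleGraph (Option (Fin 4)) := cone (pathGraph 4)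

/-- The wheel `W₄`: `C₄` plus a dominating vertex. -/
def wheel4 : SimpleGraph (Option (Fin 4)) := cone (cycleGraph 4)

/-- The butterfly: two triangles sharing exactly one vertex. -/
def butterfly : SimpleGraph (Fin 5) :=
  SimpleGraph.fromRel (fun a b =>
    (a, b) ∈ [((0:Fin 5), (1:Fin 5)), (0,2), (1,2), (0,3), (0,4), (3,4)])

/-- `G` is a disjoint union of complete graphs. -/
def IsUnionOfCliques {V : Type*} (G : SimpleGraph V) : Prop :=
  ∀ a b c, G.Adj a b → G.Adj b c → a ≠ c → G.Adj a c

/-- `G` is neighborhood perfect: the neighborhood of every vertex induces a perfect graph. -/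
def NbhdPerfect {V : Type*} [Fintype V] (G : SimpleGraph V) : Prop :=
  ∀ v : V, IsPerfect (G.induce (G.neighborSet v))
/-! Minimality forces the violating induced subgraph to be `G` itself, so `χ(G) + k ≤ Δ(G)`.
Deleting a vertex `w` leaves a graph in `Υ_k` whose chromatic number is at most `χ(G)`, so
every degree in `G - w` is below `χ(G) + k ≤ Δ(G)`. Hence a vertex `v` of maximum degree loses
a neighbour whenever another vertex is deleted: `v` dominates `G` and `Δ(G) = |V| - 1`. In
`G - w` it still has degree `|V| - 2 ≤ χ(G) + k - 1 ≤ |V| - 2`, which pins down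
`χ(G) = |V| - k - 1`. -/

namespace SimpleGraph

variable {V : Type*} {G : SimpleGraph V} {k : ℕ}

theorem IsDominatingVertex.induce {v : V} (hv : IsDominatingVertex G v) (s : Set V)
    (hvs : v ∈ s) : IsDominatingVertex (G.induce s) ⟨v, hvs⟩ :=
  fun w hw => hv w (Subtype.coe_ne_coe.mpr hw)

theorem IsDominatingVertex.degree_eq [Fintype V] {v : V} [Fintype (G.neighborSet v)]
    (hv : IsDominatingVertex G v) : G.degree v = Fintype.card V - 1 := by
  have : G.neighborSet v = {v}ᶜ := Set.ext fun w => ⟨fun h => h.ne.symm, hv w⟩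
  rw [← card_neighborSet_eq_degree, Fintype.card_congr (Equiv.setCongr this),
    Fintype.card_compl_set, Set.card_singleton]

variable [Fintype V]

theorem maxDegree_induce_univ :
    (G.induce ((Finset.univ : Finset V) : Set V)).maxDegree = G.maxDegree := by
  convert maxDegree_induce_of_support_subset (G := G) (s := (Finset.univ : Finset V))
    fun v _ => Finset.mem_coe.2 (Finset.mem_univ v)

theorem chromaticNumber_induce_univ :
    (G.induce ((Finset.univ : Finset V) : Set V)).chromaticNumber = G.chromaticNumber := by
  rw [Finset.coe_univ]
  exact chromaticNumber_congr G.induceUnivIso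

theorem UpsilonMem.maxDegree_add_one_le [Nonempty V] (h : UpsilonMem k G) :
    (G.maxDegree + 1 : ℕ∞) ≤ G.chromaticNumber + k := by
  simpa only [maxDegree_induce_univ, chromaticNumber_induce_univ] using
    h Finset.univ Finset.univ_nonempty

theorem MinForbUpsilon.chromaticNumber_add_lt (h : MinForbUpsilon k G) :
    G.chromaticNumber + k < G.maxDegree + 1 := by
  obtain ⟨s, hs, hlt⟩ : ∃ s : Finset V, s.Nonempty ∧ _ := by
    simpa only [UpsilonMem, not_forall, not_le, exists_prop] using h.1
  obtain rfl : s = Finset.univ := by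
    by_contra hne
    have : Nonempty (s : Set V) := hs.coe_sort
    exact (h.2 s hne).maxDegree_add_one_le.not_gt hlt
  simpa only [maxDegree_induce_univ, chromaticNumber_induce_univ] using hlt

theorem MinForbUpsilon.nonempty (h : MinForbUpsilon k G) : Nonempty V := by
  by_contra hV
  have : IsEmpty V := not_nonempty_iff.mp hV
  exact h.1 fun s hs => absurd (Finset.eq_empty_of_isEmpty s) hs.ne_empty

theorem MinForbUpsilon.degree_induce_erase_add_one_le (h : MinForbUpsilon k G) {v w : V}
    (hvw : v ≠ w) :
    ((G.induce ((Finset.univ.erase w : Finset V) : Set V)).degree ⟨v, by simpa using hvw⟩ + 1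
      : ℕ∞) ≤ G.chromaticNumber + k := by
  set s : Finset V := Finset.univ.erase w
  have hs : s ≠ Finset.univ := fun hs => Finset.notMem_erase w _ (hs ▸ Finset.mem_univ w)
  have : Nonempty (s : Set V) := ⟨⟨v, by simpa [s] using hvw⟩⟩
  calc _ ≤ ((G.induce (s : Set V)).maxDegree + 1 : ℕ∞) := by
        gcongr
        exact degree_le_maxDegree _ _
    _ ≤ (G.induce (s : Set V)).chromaticNumber + k := (h.2 s hs).maxDegree_add_one_le
    _ ≤ G.chromaticNumber + k := by
        gcongr
        exact chromaticNumber_mono_of_hom (Embedding.induce _).toHom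

theorem MinForbUpsilon.isDominatingVertex (h : MinForbUpsilon k G) {v : V}
    (hv : G.degree v = G.maxDegree) : IsDominatingVertex G v := by
  intro w hwv
  by_contra hvw
  have hdeg : (G.induce ((Finset.univ.erase w : Finset V) : Set V)).degree
      ⟨v, by simpa using hwv.symm⟩ = G.degree v := by
    convert degree_induce_of_neighborSet_subset (G := G)
      (s := ((Finset.univ.erase w : Finset V) : Set V))
      (v := ⟨v, by simpa using hwv.symm⟩) ?_
    intro u hu
    simpa using fun huw : u = w => hvw (huw ▸ hu)
  have hle := h.degree_induce_erase_add_one_le hwv.symm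
  rw [hdeg, hv] at hle
  exact (hle.trans_lt h.chromaticNumber_add_lt).false

end SimpleGraph

theorem minForbUpsilon_card (k : ℕ) {V : Type*} [Fintype V]
    (G : SimpleGraph V) (h : MinForbUpsilon k G) :
    G.maxDegree = Fintype.card V - 1 ∧
      G.chromaticNumber = ((Fintype.card V - k - 1 : ℕ) : ℕ∞) := by
  have := h.nonempty
  obtain ⟨c, hc⟩ := ENat.ne_top_iff_exists.mp
    (G.chromaticNumber_le_card.trans_lt (ENat.natCast_lt_top _)).ne
  have hc_pos : 0 < c := by
    have := G.colorable_of_fintype.chromaticNumber_pos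
    rwa [← hc, Nat.cast_pos] at this
  have hlt : c + k < G.maxDegree + 1 := by
    have := h.chromaticNumber_add_lt
    rw [← hc] at this
    exact_mod_cast this
  obtain ⟨v, hv⟩ := G.exists_maximal_degree_vertex
  have hdom := h.isDominatingVertex hv.symm
  have hΔ : G.maxDegree = Fintype.card V - 1 := hv ▸ hdom.degree_eq
  obtain ⟨w, hwv⟩ := Fintype.exists_ne_of_one_lt_card (by omega) v
  have hle := h.degree_induce_erase_add_one_le hwv.symm
  rw [(hdom.induce _ _).degree_eq, ← hc] at hle
  simp only [Finset.coe_sort_coe, Fintype.card_coe, Finset.card_erase_of_mem (Finset.mem_univ w),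
    Finset.card_univ] at hle
  refine ⟨hΔ, hc.symm.trans (congrArg _ ?_)⟩
  have : Fintype.card V - 1 - 1 + 1 ≤ c + k := by exact_mod_cast hle
  omega
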